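/- arXiv:1502.07744 — 3 statements merged into one kernel-verified Lean document; each statement's English description precedes it below -/
import Mathlib

section
/- Let A₁, …, A_n be components and let N = N_{A₁} × … × N_{A_n} be the product of their corresponding labelled Petri nets. For all infinite traces σ, α of N and all words σᵢ, αᵢ such that P_i(σ) = σᵢ and P_i(α) = αᵢ: if obs(σ) = obs(α), then obs(σᵢ) = obs(αᵢ). -/
/-! Labelled Petri nets -/

structure PetriNet (P : Type*) (T : Type*) (Λ : Type*) where
  flowPT : P → T → Prop
  flowTP : T → P → Prop
  label : T → Λ
  init : Set P

namespace PetriNet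

variable {P T Λ : Type*}

def preset (N : PetriNet P T Λ) (t : T) : Set P := {p | N.flowPT p t}

def postset (N : PetriNet P T Λ) (t : T) : Set P := {p | N.flowTP t p}

def fire (N : PetriNet P T Λ) (M : Set P) (t : T) : Set P := (M \ N.preset t) ∪ N.postset t

/-- An (infinite) run of a Petri net. -/
structure Run (N : PetriNet P T Λ) where
  marking : ℕ → Set P
  trans : ℕ → T
  h0 : marking 0 = N.init
  henabled : ∀ k, N.preset (trans k) ⊆ marking k
  hstep : ∀ k, marking (k + 1) = N.fire (marking k) (trans k)

/-- The trace of a run: the infinite word of labels of the fired transitions. -/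
def Run.trace {N : PetriNet P T Λ} (r : Run N) : ℕ → Λ := fun k => N.label (r.trans k)

/-- The set of infinite traces of a Petri net. -/
def InfTraces (N : PetriNet P T Λ) : Set (ℕ → Λ) := {σ | ∃ r : Run N, r.trace = σ}

/-- Reachable markings. -/
inductive ReachM (N : PetriNet P T Λ) : Set P → Prop
  | init : ReachM N N.init
  | step (M : Set P) (t : T) : ReachM N M → N.preset t ⊆ M → ReachM N (N.fire M t)

/-- A net is live if every reachable marking enables some transition. -/
def Live (N : PetriNet P T Λ) : Prop := ∀ M, N.ReachM M → ∃ t, N.preset t ⊆ M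

/-- `FireSeq N M l M'`: the finite sequence `l` of transitions can fire from `M`, yielding `M'`. -/
inductive FireSeq (N : PetriNet P T Λ) : Set P → List T → Set P → Prop
  | nil (M : Set P) : FireSeq N M [] M
  | cons (M : Set P) (t : T) (l : List T) (M' : Set P) :
      N.preset t ⊆ M → FireSeq N (N.fire M t) l M' → FireSeq N M (t :: l) M'

/-- The net has no cycle of unobservable transitions. -/
def NoUnobsCycle (N : PetriNet P T Λ) (Obs : Set Λ) : Prop :=
  ¬ ∃ (M : Set P) (l : List T), N.ReachM M ∧ l ≠ [] ∧ (∀ t ∈ l, N.label t ∉ Obs) ∧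
      N.FireSeq M l M

end PetriNet

/-! Finite-or-infinite words as `ℕ → Option Λ`, observable projection via filtering. -/

/-- View an infinite word as a (possibly finite) word. -/
def injWord {Λ : Type*} (σ : ℕ → Λ) : ℕ → Option Λ := fun n => some (σ n)

open scoped Classical in
/-- Erase from the word `w` all letters not in `S`, i.e. keep the subsequence of letters
belonging to `S` (the result is `none` from some point on if only finitely many remain). -/
noncomputable def filterWord {Λ : Type*} (S : Set Λ) (w : ℕ → Option Λ) : ℕ → Option Λ :=
  fun n =>
    if {k | ∃ a ∈ S, w k = some a}.Infinite ∨ n < {k | ∃ a ∈ S, w k = some a}.ncard then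
      w (Nat.nth (fun k => ∃ a ∈ S, w k = some a) n)
    else none

/-- Observable projection of a (possibly finite) word. -/
noncomputable def obsWord {Λ : Type*} (Obs : Set Λ) (w : ℕ → Option Λ) : ℕ → Option Λ :=
  filterWord Obs w

/-- Observable projection of an infinite word. -/
noncomputable def obsInf {Λ : Type*} (Obs : Set Λ) (σ : ℕ → Λ) : ℕ → Option Λ :=
  filterWord Obs (injWord σ)

/-- The letter `f` occurs in the infinite word `σ`. -/
def occursInf {Λ : Type*} (f : Λ) (σ : ℕ → Λ) : Prop := ∃ k, σ k = f

/-- The letter `f` occurs in the (possibly finite) word `w`. -/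
def occursWord {Λ : Type*} (f : Λ) (w : ℕ → Option Λ) : Prop := ∃ k, w k = some f

namespace PetriNet

variable {P T Λ : Type*}

/-- The fault `f` is diagnosable in the net `N`. -/
def FaultDiagnosable (Obs : Set Λ) (N : PetriNet P T Λ) (f : Λ) : Prop :=
  ∀ σ ∈ N.InfTraces, ∀ α ∈ N.InfTraces,
    obsInf Obs σ = obsInf Obs α → occursInf f σ → occursInf f α

/-- The net `N` is diagnosable: every fault of `Flt` is diagnosable in it. -/
def Diagnosable (Obs Flt : Set Λ) (N : PetriNet P T Λ) : Prop :=
  ∀ f ∈ Flt, N.FaultDiagnosable Obs f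

/-- The `f`-fault-free version of a net: all transitions labelled `f` are deleted. -/
def faultFree (N : PetriNet P T Λ) (f : Λ) : PetriNet P {t : T // N.label t ≠ f} Λ where
  flowPT p t := N.flowPT p t.1
  flowTP t p := N.flowTP t.1 p
  label t := N.label t.1
  init := N.init

end PetriNet

/-! Components: deterministic automata with a given alphabet. -/

structure Component (Q : Type*) (Λ : Type*) where
  alph : Set Λ
  delta : Q → Λ → Option Q
  start : Q
  dom : ∀ q a q', delta q a = some q' → a ∈ alph

namespace Component

variable {Q Λ : Type*}

/-- The infinite traces of a component: words labelling infinite paths from the initial state. -/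
def InfTraces (C : Component Q Λ) : Set (ℕ → Λ) :=
  {σ | ∃ π : ℕ → Q, π 0 = C.start ∧ ∀ k, C.delta (π k) (σ k) = some (π (k + 1))}

inductive Reach (C : Component Q Λ) : Q → Prop
  | start : Reach C C.start
  | step (q : Q) (a : Λ) (q' : Q) : Reach C q → C.delta q a = some q' → Reach C q'

/-- A component is live if every reachable state enables some action. -/
def Live (C : Component Q Λ) : Prop := ∀ q, C.Reach q → ∃ a q', C.delta q a = some q'

/-- Extension of the transition function to finite words. -/
def deltaStar (C : Component Q Λ) : Q → List Λ → Option Q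
  | q, [] => some q
  | q, a :: l =>
    match C.delta q a with
    | some q' => C.deltaStar q' l
    | none => none

/-- The component has no cycle of unobservable actions. -/
def NoUnobsCycle (C : Component Q Λ) (Obs : Set Λ) : Prop :=
  ¬ ∃ (q : Q) (l : List Λ), C.Reach q ∧ l ≠ [] ∧ (∀ a ∈ l, a ∉ Obs) ∧
      C.deltaStar q l = some q

/-- The fault `f` is diagnosable in the component `C`. -/
def FaultDiagnosable (Obs : Set Λ) (C : Component Q Λ) (f : Λ) : Prop :=
  ∀ σ ∈ C.InfTraces, ∀ α ∈ C.InfTraces,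
    obsInf Obs σ = obsInf Obs α → occursInf f σ → occursInf f α

/-- The component `C` is diagnosable: every fault of `Flt` is diagnosable in it. -/
def Diagnosable (Obs Flt : Set Λ) (C : Component Q Λ) : Prop :=
  ∀ f ∈ Flt, C.FaultDiagnosable Obs f

/-- The transitions of a component, as triples `(q, a, q')` with `δ q a = q'`. -/
def Trans (C : Component Q Λ) : Type _ :=
  {x : Q × Λ × Q // C.delta x.1 x.2.1 = some x.2.2}

/-- The labelled Petri net corresponding to a component. -/
def toNet (C : Component Q Λ) : PetriNet Q C.Trans Λ where
  flowPT p t := p = t.1.1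
  flowTP t p := p = t.1.2.2
  label t := t.1.2.1
  init := {C.start}

end Component

/-! Labelled Petri nets equipped with an alphabet, and their product. -/

structure ANet (P : Type*) (T : Type*) (Λ : Type*) where
  net : PetriNet P T Λ
  alph : Set Λ
  labmem : ∀ t, net.label t ∈ alph

/-- The net of a component, equipped with the component's alphabet. -/
def Component.toANet {Q Λ : Type*} (C : Component Q Λ) : ANet Q C.Trans Λ :=
  ⟨C.toNet, C.alph, fun t => C.dom t.1.1 t.1.2.1 t.1.2.2 t.2⟩

/-- A synchronized transition of the product of the nets `Ns`: a label together with a choice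
of one transition with that label from every component net whose alphabet contains the label
(components whose alphabet does not contain the label do not participate). -/
structure SyncTrans {ι : Type*} {P T : ι → Type*} {Λ : Type*} (Ns : ∀ i, ANet (P i) (T i) Λ) where
  lab : Λ
  choice : ∀ i, Option (T i)
  used : ∃ i, lab ∈ (Ns i).alph
  sync : ∀ i, lab ∈ (Ns i).alph → ∃ t, choice i = some t ∧ (Ns i).net.label t = lab
  not_mem : ∀ i, lab ∉ (Ns i).alph → choice i = none

/-- The product of labelled Petri nets, synchronizing on shared actions. -/
def ANet.prod {ι : Type*} {P T : ι → Type*} {Λ : Type*} (Ns : ∀ i, ANet (P i) (T i) Λ) :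
    PetriNet (Σ i, P i) (SyncTrans Ns) Λ where
  flowPT p t := ∃ u, t.choice p.1 = some u ∧ (Ns p.1).net.flowPT p.2 u
  flowTP t p := ∃ u, t.choice p.1 = some u ∧ (Ns p.1).net.flowTP u p.2
  label t := t.lab
  init := {p | p.2 ∈ (Ns p.1).net.init}

/-- `IsProjOf Ns i σ w`: the word `w` is the projection on component `i` of the infinite
trace `σ` of the product net, i.e. there is a run of the product net with trace `σ` whose
projection on component `i` (keeping exactly the transitions whose label is in the `i`-th
alphabet) has trace `w`. -/
def IsProjOf {ι : Type*} {P T : ι → Type*} {Λ : Type*} (Ns : ∀ i, ANet (P i) (T i) Λ)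
    (i : ι) (σ : ℕ → Λ) (w : ℕ → Option Λ) : Prop :=
  ∃ r : (ANet.prod Ns).Run, r.trace = σ ∧ filterWord (Ns i).alph (injWord σ) = w

/-- The `f`-fault-free version of an alphabet-equipped net. -/
def ANet.faultFree {P T Λ : Type*} (N : ANet P T Λ) (f : Λ) :
    ANet P {t : T // N.net.label t ≠ f} Λ :=
  ⟨N.net.faultFree f, N.alph, fun t => N.labmem t.1⟩

/-- The family of nets used to build `Nⁱ`: component `i` itself together with the
`f`-fault-free versions of all the other components (the subtype condition is trivial
for `j = i` and says "not labelled `f`" for `j ≠ i`). -/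
def exceptNet {ι : Type*} {Q : ι → Type*} {Λ : Type*} (C : ∀ j, Component (Q j) Λ)
    (f : Λ) (i j : ι) :
    ANet (Q j) {t : (C j).Trans // j ≠ i → (C j).toNet.label t ≠ f} Λ where
  net :=
    { flowPT := fun p t => (C j).toNet.flowPT p t.1
      flowTP := fun t p => (C j).toNet.flowTP t.1 p
      label := fun t => (C j).toNet.label t.1
      init := (C j).toNet.init }
  alph := (C j).alph
  labmem := fun t => (C j).dom t.1.1.1 t.1.1.2.1 t.1.1.2.2 t.1.2

/-- The net `Nⁱ`: the product of `N_{A_i}` with the `f`-fault-free versions of all the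
other components. -/
def Nhat {ι : Type*} {Q : ι → Type*} {Λ : Type*} (C : ∀ j, Component (Q j) Λ)
    (f : Λ) (i : ι) :=
  ANet.prod (fun j => exceptNet C f i j)

/-! The product automaton. -/

open scoped Classical in
noncomputable def prodDelta {ι : Type*} {Q : ι → Type*} {Λ : Type*}
    (C : ∀ i, Component (Q i) Λ) (q : ∀ i, Q i) (a : Λ) : Option (∀ i, Q i) :=
  if (∃ i, a ∈ (C i).alph) ∧ ∀ i, a ∈ (C i).alph → (C i).delta (q i) a ≠ none then
    some (fun i => ((C i).delta (q i) a).getD (q i))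
  else none

/-- The product automaton `A₁ × ⋯ × A_n`. -/
noncomputable def prodComponent {ι : Type*} {Q : ι → Type*} {Λ : Type*}
    (C : ∀ i, Component (Q i) Λ) : Component (∀ i, Q i) Λ where
  alph := ⋃ i, (C i).alph
  delta := prodDelta C
  start := fun i => (C i).start
  dom := by
    intro q a q' h
    unfold prodDelta at h
    split_ifs at h with hc
    · exact Set.mem_iUnion.2 hc.1

/-! The verifier. -/

/-- Labels of the verifier: either a common (fused, observable) label, or a label of a
local transition of the first replica (`a¹`, written `.inr (.inl a)`), or of the second
replica (`a²`, written `.inr (.inr a)`). -/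
abbrev VerLabel (Λ : Type*) := Λ ⊕ (Λ ⊕ Λ)

/-- Transitions of the verifier: fused pairs of an observable transition of the first
replica with a same-labelled transition of the second (fault-free) replica, or local
unobservable transitions of the first replica, or local unobservable non-`f` transitions
of the second replica. -/
def VerTrans {P T Λ : Type*} (N : PetriNet P T Λ) (Obs : Set Λ) (f : Λ) : Type _ :=
  {x : T × T // N.label x.1 ∈ Obs ∧ N.label x.2 = N.label x.1 ∧ N.label x.2 ≠ f} ⊕
    ({t : T // N.label t ∉ Obs} ⊕ {t : T // N.label t ∉ Obs ∧ N.label t ≠ f})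

/-- The verifier `V_f` of `N` with respect to the fault `f`: two replicas of `N` put
side by side, the `f`-labelled transitions removed from the second replica, and each
observable transition of the first replica fused with each same-labelled transition of
the second replica. -/
def verifier {P T Λ : Type*} (N : PetriNet P T Λ) (Obs : Set Λ) (f : Λ) :
    PetriNet (P ⊕ P) (VerTrans N Obs f) (VerLabel Λ) where
  flowPT p t :=
    match p, t with
    | .inl p, .inl x => N.flowPT p x.1.1
    | .inr p, .inl x => N.flowPT p x.1.2
    | .inl p, .inr (.inl t) => N.flowPT p t.1
    | .inr p, .inr (.inr t) => N.flowPT p t.1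
    | _, _ => False
  flowTP t p :=
    match p, t with
    | .inl p, .inl x => N.flowTP x.1.1 p
    | .inr p, .inl x => N.flowTP x.1.2 p
    | .inl p, .inr (.inl t) => N.flowTP t.1 p
    | .inr p, .inr (.inr t) => N.flowTP t.1 p
    | _, _ => False
  label t :=
    match t with
    | .inl x => Sum.inl (N.label x.1.1)
    | .inr (.inl t) => Sum.inr (Sum.inl (N.label t))
    | .inr (.inr t) => Sum.inr (Sum.inr (N.label t))
  init := Sum.inl '' N.init ∪ Sum.inr '' N.init

/-!
The projection of a trace on a component and its observable projection are both letter filters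
of the trace: filtering by `S` keeps the subsequence of letters in `S`. Filters compose by
intersecting their sets, so they commute, and `obs(σᵢ)` is the restriction of `obs(σ)` to the
alphabet of `Aᵢ`; it therefore depends on `σ` only through `obs(σ)`.
-/

theorem Set.infinite_or_lt_ncard_iff {α : Type*} {s : Set α} {n : ℕ} :
    s.Infinite ∨ n < s.ncard ↔ ∀ hf : s.Finite, n < hf.toFinset.card := by
  by_cases hf : s.Finite
  · simp only [Set.not_infinite.2 hf, false_or, ← Set.ncard_eq_toFinset_card s hf]
    exact ⟨fun h _ => h, fun h => h hf⟩
  · exact iff_of_true (.inl hf) fun hf' => absurd hf' hf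

namespace Nat

variable {p q : ℕ → Prop} [DecidablePred p] [DecidablePred q]

-- `count p` is injective on the `p`-positions, which contain the `q`-positions.
theorem count_image_count (hqp : ∀ k, q k → p k) [DecidablePred fun m => ∃ k, q k ∧ count p k = m]
    (k : ℕ) : count (fun m => ∃ k, q k ∧ count p k = m) (count p k) = count q k := by
  induction k with
  | zero => simp
  | succ k ih =>
    by_cases hpk : p k
    · have hq : (∃ k', q k' ∧ count p k' = count p k) ↔ q k :=
        ⟨fun ⟨k', hqk', heq⟩ => count_injective (hqp k' hqk') hpk heq ▸ hqk', fun h => ⟨k, h, rfl⟩⟩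
      rw [count_succ_eq_succ_count hpk, count_succ, count_succ, ih]
      simp only [hq]
    · have hqk : ¬ q k := fun h => hpk (hqp k h)
      rw [count_succ_eq_count hpk, count_succ_eq_count hqk, ih]

end Nat

section FilterWord

open scoped Classical

variable {Λ : Type*}

-- Locating letters by `count` rather than `Nat.nth` avoids the junk value of `Nat.nth` past the
-- last letter of a finite filtered word.
theorem filterWord_eq_some_iff {S : Set Λ} {w : ℕ → Option Λ} {n : ℕ} {a : Λ} :
    filterWord S w n = some a ↔
      a ∈ S ∧ ∃ k, w k = some a ∧ Nat.count (fun k => ∃ b ∈ S, w k = some b) k = n := by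
  rw [filterWord]
  split_ifs with hn
  · rw [Set.infinite_or_lt_ncard_iff] at hn
    refine ⟨fun h => ?_, fun ⟨haS, k, hk, hcount⟩ => ?_⟩
    · obtain ⟨b, hbS, hb⟩ := Nat.nth_mem n hn
      exact ⟨Option.some_injective _ (hb.symm.trans h) ▸ hbS, _, h, Nat.count_nth hn⟩
    · rwa [← hcount, Nat.nth_count ⟨a, haS, hk⟩]
  · refine ⟨False.elim, fun ⟨haS, k, hk, hcount⟩ => hn ?_⟩
    rw [Set.infinite_or_lt_ncard_iff, ← hcount]
    exact fun hf => Nat.count_lt_card hf ⟨a, haS, hk⟩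

theorem filterWord_filterWord (S S' : Set Λ) (w : ℕ → Option Λ) :
    filterWord S (filterWord S' w) = filterWord (S ∩ S') w := by
  set pS' : ℕ → Prop := fun k => ∃ b ∈ S', w k = some b
  set pSS' : ℕ → Prop := fun k => ∃ b ∈ S ∩ S', w k = some b
  have hpositions : (fun m => ∃ b ∈ S, filterWord S' w m = some b) =
      fun m => ∃ k, pSS' k ∧ Nat.count pS' k = m := by
    ext m
    simp_rw [filterWord_eq_some_iff]
    constructor
    · rintro ⟨b, hbS, hbS', k, hk, rfl⟩
      exact ⟨k, ⟨b, ⟨hbS, hbS'⟩, hk⟩, rfl⟩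
    · rintro ⟨k, ⟨b, ⟨hbS, hbS'⟩, hk⟩, rfl⟩
      exact ⟨b, hbS, hbS', k, hk, rfl⟩
  have hcount (k : ℕ) :=
    Nat.count_image_count (p := pS') (q := pSS') (fun _ ⟨b, hb, hbk⟩ => ⟨b, hb.2, hbk⟩) k
  funext n
  refine Option.ext fun a => ?_
  rw [filterWord_eq_some_iff]
  simp only [hpositions]
  simp_rw [filterWord_eq_some_iff]
  constructor
  · rintro ⟨haS, _, ⟨haS', k, hk, rfl⟩, rfl⟩
    exact ⟨⟨haS, haS'⟩, k, hk, (hcount k).symm⟩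
  · rintro ⟨⟨haS, haS'⟩, k, hk, rfl⟩
    exact ⟨haS, _, ⟨haS', k, hk, rfl⟩, hcount k⟩

theorem filterWord_comm (S S' : Set Λ) (w : ℕ → Option Λ) :
    filterWord S (filterWord S' w) = filterWord S' (filterWord S w) := by
  rw [filterWord_filterWord, filterWord_filterWord, Set.inter_comm]

end FilterWord

theorem obs_eq_implies_proj_obs_eq_general
    {ι : Type*} {Q : ι → Type*}
    {Λ : Type*} (Obs : Set Λ)
    (C : ∀ i, Component (Q i) Λ)
    (σ α : ℕ → Λ)
    (i : ι) (w v : ℕ → Option Λ)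
    (hw : IsProjOf (fun i => (C i).toANet) i σ w)
    (hv : IsProjOf (fun i => (C i).toANet) i α v)
    (hobs : obsInf Obs σ = obsInf Obs α) :
    obsWord Obs w = obsWord Obs v := by
  obtain ⟨-, -, rfl⟩ := hw
  obtain ⟨-, -, rfl⟩ := hv
  calc obsWord Obs (filterWord (C i).alph (injWord σ))
      = filterWord (C i).alph (obsInf Obs σ) := filterWord_comm Obs _ _
    _ = filterWord (C i).alph (obsInf Obs α) := by rw [hobs]
    _ = obsWord Obs (filterWord (C i).alph (injWord α)) := filterWord_comm _ Obs _

/-- Let `A₁, …, A_n` be components and `N = N_{A₁} × ⋯ × N_{A_n}` the product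
of their corresponding labelled Petri nets (all components synchronize on their shared actions,
which are observable). For all infinite traces `σ, α` of `N` and all words `σᵢ, αᵢ` such that
`P_i(σ) = σᵢ` and `P_i(α) = αᵢ`: if `obs(σ) = obs(α)`, then `obs(σᵢ) = obs(αᵢ)`. -/
theorem obs_eq_implies_proj_obs_eq
    {ι : Type*} [Finite ι] [Nonempty ι] {Q : ι → Type*} [∀ i, Finite (Q i)]
    {Λ : Type*} [Finite Λ] (Obs Flt : Set Λ) (hFlt : Flt ⊆ Obsᶜ)
    (C : ∀ i, Component (Q i) Λ)
    (hlive : ∀ i, (C i).Live) (hcyc : ∀ i, (C i).NoUnobsCycle Obs)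
    (hshared : ∀ i j, i ≠ j → (C i).alph ∩ (C j).alph ⊆ Obs)
    (σ α : ℕ → Λ)
    (hσ : σ ∈ (ANet.prod fun i => (C i).toANet).InfTraces)
    (hα : α ∈ (ANet.prod fun i => (C i).toANet).InfTraces)
    (i : ι) (w v : ℕ → Option Λ)
    (hw : IsProjOf (fun i => (C i).toANet) i σ w)
    (hv : IsProjOf (fun i => (C i).toANet) i α v)
    (hobs : obsInf Obs σ = obsInf Obs α) :
    obsWord Obs w = obsWord Obs v :=
  obs_eq_implies_proj_obs_eq_general Obs C σ α i w v hw hv hobs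
end

section
/- Let A₁, …, A_n be components, N = N_{A₁} × … × N_{A_n}, f ∈ Σ_F a fault, and let Nⁱ be the product of N_{A_i} with the f-fault-free versions N_{A_j}^f of all other components j ≠ i. Then for every infinite word σ: σ is an infinite trace of Nⁱ if and only if σ is an infinite trace of N and, for every j ≠ i and every word σⱼ such that P_j(σ) = σⱼ, the fault f does not occur in σⱼ. -/
/-! Auxiliary lemmas for Statement 4. -/

open scoped Classical in
lemma occursWord_filterWord_inj {Λ : Type*} (S : Set Λ) (σ : ℕ → Λ) (f : Λ) :
    occursWord f (filterWord S (injWord σ)) ↔ f ∈ S ∧ ∃ k, σ k = f := by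
  classical
  constructor
  · rintro ⟨n, hn⟩
    unfold filterWord at hn
    split_ifs at hn with hc
    · have hmem : (∃ a ∈ S, injWord σ
          (Nat.nth (fun k => ∃ a ∈ S, injWord σ k = some a) n) = some a) := by
        refine Nat.nth_mem (p := fun k => ∃ a ∈ S, injWord σ k = some a) n ?_
        intro hfin
        rcases hc with hc | hc
        · exact (hc hfin).elim
        · rwa [Set.ncard_eq_toFinset_card _ hfin] at hc
      obtain ⟨a, haS, ha⟩ := hmem
      simp only [injWord, Option.some.injEq] at hn ha
      exact ⟨by rw [← hn, ha]; exact haS, _, hn⟩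
  · rintro ⟨hS, k, hk⟩
    have hpk : (fun k => ∃ a ∈ S, injWord σ k = some a) k := ⟨f, hS, by simp [injWord, hk]⟩
    have hnth := Nat.nth_count (p := fun k => ∃ a ∈ S, injWord σ k = some a) hpk
    refine ⟨Nat.count (fun k => ∃ a ∈ S, injWord σ k = some a) k, ?_⟩
    unfold filterWord
    rw [if_pos, hnth]
    · simp [injWord, hk]
    · by_cases hinf : {k | ∃ a ∈ S, injWord σ k = some a}.Infinite
      · exact Or.inl hinf
      · refine Or.inr ?_
        have hfin := Set.not_infinite.mp hinf
        rw [Set.ncard_eq_toFinset_card _ hfin]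
        exact Nat.count_lt_card hfin hpk

lemma opmap_eq_some {α β : Type*} {p : α → Prop} (g : ∀ a, p a → β) (o : Option α)
    (H : ∀ a ∈ o, p a) (a : α) (h : o = some a) :
    o.pmap g H = some (g a (H a h)) := by subst h; rfl

lemma opmap_eq_none {α β : Type*} {p : α → Prop} (g : ∀ a, p a → β) (o : Option α)
    (H : ∀ a ∈ o, p a) (h : o = none) : o.pmap g H = none := by subst h; rfl

lemma opmap_inv {α β : Type*} {p : α → Prop} (g : ∀ a, p a → β) (o : Option α)
    (H : ∀ a ∈ o, p a) (b : β) (h : o.pmap g H = some b) :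
    ∃ a, ∃ ha : o = some a, b = g a (H a ha) := by
  cases o with
  | none => simp [Option.pmap] at h
  | some a => exact ⟨a, rfl, by simpa [Option.pmap] using h.symm⟩

lemma SyncTrans.choice_label {ι : Type*} {P T : ι → Type*} {Λ : Type*}
    {Ns : ∀ j, ANet (P j) (T j) Λ} (s : SyncTrans Ns) {j : ι} {t : T j}
    (ht : s.choice j = some t) :
    (Ns j).net.label t = s.lab ∧ s.lab ∈ (Ns j).alph := by
  by_cases hj : s.lab ∈ (Ns j).alph
  · obtain ⟨t', ht', hl⟩ := s.sync j hj
    rw [ht] at ht'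
    cases ht'
    exact ⟨hl, hj⟩
  · rw [s.not_mem j hj] at ht
    exact absurd ht (by simp)

section StatementFour

variable {ι : Type*} {Q : ι → Type*} {Λ : Type*} (C : ∀ j, Component (Q j) Λ) (f : Λ) (i : ι)

/-- Forgetting the fault-freeness constraints: a synchronized transition of `Nⁱ` yields a
synchronized transition of `N`. -/
def fwdTrans (s : SyncTrans (fun j => exceptNet C f i j)) :
    SyncTrans (fun j => (C j).toANet) where
  lab := s.lab
  choice j := (s.choice j).map Subtype.val
  used := s.used
  sync := fun j hj => by
    obtain ⟨t, ht, hl⟩ := s.sync j hj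
    exact ⟨t.1, by show Option.map Subtype.val (s.choice j) = some t.1; rw [ht]; rfl, hl⟩
  not_mem := fun j hj => by
    show Option.map Subtype.val (s.choice j) = none
    rw [s.not_mem j hj]; rfl

lemma fwdTrans_preset (s : SyncTrans (fun j => exceptNet C f i j)) :
    (ANet.prod fun j => (C j).toANet).preset (fwdTrans C f i s) = (Nhat C f i).preset s := by
  ext p
  constructor
  · rintro ⟨u, hu, hfl⟩
    rcases Option.map_eq_some_iff.mp hu with ⟨v, hv, rfl⟩
    exact ⟨v, hv, hfl⟩
  · rintro ⟨u, hu, hfl⟩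
    refine ⟨u.1, ?_, hfl⟩
    show Option.map Subtype.val (s.choice p.1) = some u.1
    rw [hu]; rfl

lemma fwdTrans_postset (s : SyncTrans (fun j => exceptNet C f i j)) :
    (ANet.prod fun j => (C j).toANet).postset (fwdTrans C f i s) = (Nhat C f i).postset s := by
  ext p
  constructor
  · rintro ⟨u, hu, hfl⟩
    rcases Option.map_eq_some_iff.mp hu with ⟨v, hv, rfl⟩
    exact ⟨v, hv, hfl⟩
  · rintro ⟨u, hu, hfl⟩
    refine ⟨u.1, ?_, hfl⟩
    show Option.map Subtype.val (s.choice p.1) = some u.1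
    rw [hu]; rfl

/-- A run of `Nⁱ` yields a run of `N` with the same markings and trace. -/
def fwdRun (r : (Nhat C f i).Run) : (ANet.prod fun j => (C j).toANet).Run where
  marking := r.marking
  trans k := fwdTrans C f i (r.trans k)
  h0 := r.h0
  henabled k := by rw [fwdTrans_preset]; exact r.henabled k
  hstep k := by
    rw [r.hstep k]
    unfold PetriNet.fire
    rw [fwdTrans_preset, fwdTrans_postset]

/-- Adding the fault-freeness constraints: a fault-free synchronized transition of `N`
yields a synchronized transition of `Nⁱ`. -/
def bwdTrans (s : SyncTrans (fun j => (C j).toANet))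
    (h : ∀ j, j ≠ i → s.lab ∈ (C j).alph → s.lab ≠ f) :
    SyncTrans (fun j => exceptNet C f i j) where
  lab := s.lab
  choice j := (s.choice j).pmap
    (fun t ht => (⟨t, fun hji => by
        have hc := s.choice_label ht
        rw [show ((C j).toANet).net.label t = (C j).toNet.label t from rfl] at hc
        rw [hc.1]
        exact h j hji hc.2⟩ : {t : (C j).Trans // j ≠ i → (C j).toNet.label t ≠ f}))
    (fun a ha => ha)
  used := s.used
  sync := fun j hj => by
    obtain ⟨t, ht, hl⟩ := s.sync j hj
    exact ⟨_, opmap_eq_some _ _ _ t ht, hl⟩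
  not_mem := fun j hj => opmap_eq_none _ _ _ (s.not_mem j hj)

lemma bwdTrans_preset (s : SyncTrans (fun j => (C j).toANet))
    (h : ∀ j, j ≠ i → s.lab ∈ (C j).alph → s.lab ≠ f) :
    (Nhat C f i).preset (bwdTrans C f i s h) = (ANet.prod fun j => (C j).toANet).preset s := by
  ext p
  constructor
  · rintro ⟨u, hu, hfl⟩
    simp only [bwdTrans] at hu
    obtain ⟨a, ha, rfl⟩ := opmap_inv _ _ _ _ hu
    exact ⟨a, ha, hfl⟩
  · rintro ⟨u, hu, hfl⟩
    have hcl := s.choice_label hu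
    refine ⟨⟨u, fun hji => ?_⟩, ?_, hfl⟩
    · rw [show (C p.1).toNet.label u = s.lab from hcl.1]
      exact h p.1 hji hcl.2
    · simp only [bwdTrans]
      exact opmap_eq_some _ _ _ u hu

lemma bwdTrans_postset (s : SyncTrans (fun j => (C j).toANet))
    (h : ∀ j, j ≠ i → s.lab ∈ (C j).alph → s.lab ≠ f) :
    (Nhat C f i).postset (bwdTrans C f i s h) = (ANet.prod fun j => (C j).toANet).postset s := by
  ext p
  constructor
  · rintro ⟨u, hu, hfl⟩
    simp only [bwdTrans] at hu
    obtain ⟨a, ha, rfl⟩ := opmap_inv _ _ _ _ hu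
    exact ⟨a, ha, hfl⟩
  · rintro ⟨u, hu, hfl⟩
    have hcl := s.choice_label hu
    refine ⟨⟨u, fun hji => ?_⟩, ?_, hfl⟩
    · rw [show (C p.1).toNet.label u = s.lab from hcl.1]
      exact h p.1 hji hcl.2
    · simp only [bwdTrans]
      exact opmap_eq_some _ _ _ u hu

/-- A fault-free run of `N` yields a run of `Nⁱ` with the same markings and trace. -/
def bwdRun (r : (ANet.prod fun j => (C j).toANet).Run)
    (h : ∀ k j, j ≠ i → (r.trans k).lab ∈ (C j).alph → (r.trans k).lab ≠ f) :
    (Nhat C f i).Run where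
  marking := r.marking
  trans k := bwdTrans C f i (r.trans k) (h k)
  h0 := r.h0
  henabled k := by rw [bwdTrans_preset]; exact r.henabled k
  hstep k := by
    rw [r.hstep k]
    unfold PetriNet.fire
    rw [bwdTrans_preset, bwdTrans_postset]

end StatementFour

/-- Let `A₁, …, A_n` be components, `N = N_{A₁} × ⋯ × N_{A_n}`, `f ∈ Σ_F` a
fault, and let `Nⁱ` be the product of `N_{A_i}` with the `f`-fault-free versions of all other
components. Then for every infinite word `σ`: `σ` is an infinite trace of `Nⁱ` if and only if
`σ` is an infinite trace of `N` and, for every `j ≠ i` and every word `σⱼ` with `P_j(σ) = σⱼ`,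
the fault `f` does not occur in `σⱼ`. -/
theorem traces_of_Nhat
    {ι : Type*} [Finite ι] [Nonempty ι] {Q : ι → Type*} [∀ i, Finite (Q i)]
    {Λ : Type*} [Finite Λ] (Obs Flt : Set Λ) (hFlt : Flt ⊆ Obsᶜ)
    (C : ∀ i, Component (Q i) Λ)
    (hlive : ∀ i, (C i).Live) (hcyc : ∀ i, (C i).NoUnobsCycle Obs)
    (f : Λ) (hf : f ∈ Flt) (i : ι) (σ : ℕ → Λ) :
    σ ∈ (Nhat C f i).InfTraces ↔
      σ ∈ (ANet.prod fun j => (C j).toANet).InfTraces ∧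
        ∀ j, j ≠ i → ∀ w, IsProjOf (fun j => (C j).toANet) j σ w → ¬ occursWord f w := by
  constructor
  · rintro ⟨r, hr⟩
    refine ⟨⟨fwdRun C f i r, hr⟩, ?_⟩
    rintro j hj w ⟨r', hr', hw⟩ hocc
    rw [← hw] at hocc
    rw [occursWord_filterWord_inj] at hocc
    obtain ⟨hfS, m, hm⟩ := hocc
    have hlab : (r.trans m).lab = f := (congrFun hr m : r.trace m = σ m).trans hm
    have hmem : (r.trans m).lab ∈ (exceptNet C f i j).alph := by rw [hlab]; exact hfS
    obtain ⟨t, ht, hl⟩ := (r.trans m).sync j hmem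
    exact t.2 hj (hl.trans hlab)
  · rintro ⟨⟨r, hr⟩, hsafe⟩
    have h : ∀ k j, j ≠ i → (r.trans k).lab ∈ (C j).alph → (r.trans k).lab ≠ f := by
      intro k j hj hmem heq
      refine hsafe j hj (filterWord (C j).alph (injWord σ)) ⟨r, hr, rfl⟩ ?_
      rw [occursWord_filterWord_inj]
      exact ⟨heq ▸ hmem, k, ((congrFun hr k : r.trace k = σ k).symm.trans heq : σ k = f)⟩
    exact ⟨bwdRun C f i r h, hr⟩
end

section
/- Let A₁, …, A_n be components, N = N_{A₁} × … × N_{A_n}, and for a fault f ∈ Σ_F let Nⁱ be the product of N_{A_i} with the f-fault-free versions N_{A_j}^f of all other components j ≠ i. If N is diagnosable, then for every fault f ∈ Σ_F and every index i, the net Nⁱ (built with respect to f) is diagnosable. -/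
/-- Lift a synchronized transition of `Nⁱ` to a synchronized transition of `N`. -/
def liftTrans {ι : Type*} {Q : ι → Type*} {Λ : Type*} (C : ∀ j, Component (Q j) Λ)
    (f : Λ) (i : ι) (t : SyncTrans (fun j => exceptNet C f i j)) :
    SyncTrans (fun j => (C j).toANet) where
  lab := t.lab
  choice j := (t.choice j).map Subtype.val
  used := t.used
  sync := fun j hj => by
    obtain ⟨u, hu, hl⟩ := t.sync j hj
    exact ⟨u.1, by simp [hu], hl⟩
  not_mem := fun j hj => by simp [t.not_mem j hj]

lemma lift_preset {ι : Type*} {Q : ι → Type*} {Λ : Type*} (C : ∀ j, Component (Q j) Λ)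
    (f : Λ) (i : ι) (t : SyncTrans (fun j => exceptNet C f i j)) :
    (ANet.prod fun j => (C j).toANet).preset (liftTrans C f i t) =
      (Nhat C f i).preset t := by
  ext p
  simp only [ANet.prod, Nhat, PetriNet.preset, Set.mem_setOf_eq, liftTrans,
    Option.map_eq_some_iff]
  constructor
  · rintro ⟨u, ⟨v, hv, rfl⟩, h⟩; exact ⟨v, hv, h⟩
  · rintro ⟨v, hv, h⟩; exact ⟨v.1, ⟨v, hv, rfl⟩, h⟩

lemma lift_postset {ι : Type*} {Q : ι → Type*} {Λ : Type*} (C : ∀ j, Component (Q j) Λ)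
    (f : Λ) (i : ι) (t : SyncTrans (fun j => exceptNet C f i j)) :
    (ANet.prod fun j => (C j).toANet).postset (liftTrans C f i t) =
      (Nhat C f i).postset t := by
  ext p
  simp only [ANet.prod, Nhat, PetriNet.postset, Set.mem_setOf_eq, liftTrans,
    Option.map_eq_some_iff]
  constructor
  · rintro ⟨u, ⟨v, hv, rfl⟩, h⟩; exact ⟨v, hv, h⟩
  · rintro ⟨v, hv, h⟩; exact ⟨v.1, ⟨v, hv, rfl⟩, h⟩

lemma Nhat_traces_subset {ι : Type*} {Q : ι → Type*} {Λ : Type*}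
    (C : ∀ j, Component (Q j) Λ) (f : Λ) (i : ι) :
    (Nhat C f i).InfTraces ⊆ (ANet.prod fun j => (C j).toANet).InfTraces := by
  rintro σ ⟨r, rfl⟩
  refine ⟨{ marking := r.marking
            trans := fun k => liftTrans C f i (r.trans k)
            h0 := r.h0
            henabled := fun k => by rw [lift_preset]; exact r.henabled k
            hstep := fun k => by
              have := r.hstep k
              unfold PetriNet.fire at *
              rw [lift_preset, lift_postset]; exact this }, ?_⟩
  funext k
  rfl

/-- Let `A₁, …, A_n` be components, `N = N_{A₁} × ⋯ × N_{A_n}`, and for a fault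
`f ∈ Σ_F` let `Nⁱ` be the product of `N_{A_i}` with the `f`-fault-free versions of all other
components. If `N` is diagnosable, then for every fault `f ∈ Σ_F` and every index `i`, the net
`Nⁱ` (built with respect to `f`) is diagnosable. -/
theorem diagnosable_implies_Nhat_diagnosable
    {ι : Type*} [Finite ι] [Nonempty ι] {Q : ι → Type*} [∀ i, Finite (Q i)]
    {Λ : Type*} [Finite Λ] (Obs Flt : Set Λ) (hFlt : Flt ⊆ Obsᶜ)
    (C : ∀ i, Component (Q i) Λ)
    (hlive : ∀ i, (C i).Live) (hcyc : ∀ i, (C i).NoUnobsCycle Obs)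
    (hdiag : (ANet.prod fun j => (C j).toANet).Diagnosable Obs Flt) :
    ∀ f ∈ Flt, ∀ i : ι, (Nhat C f i).Diagnosable Obs Flt := by
  intro f hf i g hg σ hσ α hα hobs hocc
  exact hdiag g hg σ (Nhat_traces_subset C f i hσ) α (Nhat_traces_subset C f i hα) hobs hocc
end
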